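/- arXiv:1709.06637 — 8 statements merged into one kernel-verified Lean document; each statement's English description precedes it below -/
import Mathlib

section
/- Let S = (S_v, S_e) be a nondegenerate TCK family for a graph G on H. For each vertex v set W_v = (S_v − Σ_{e ∈ r^{-1}(v)} S_e S_e*) H (SOT-sum). Then W_v is a wandering subspace supported on v: for any two pairs (μ, v) ≠ (ν, w) of paths μ, ν with s(μ) = v, s(ν) = w, the subspaces S_μ W_v and S_ν W_w are orthogonal. -/
structure DirectedGraph where
  V : Type
  E : Type
  src : E → V
  rng : E → V

namespace DirectedGraph

/-- Two edges are composable (as in `e₂ e₁`, `e₂` after `e₁`) when `s(e₂) = r(e₁)`. -/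
def Composable (G : DirectedGraph) (a b : G.E) : Prop := G.src a = G.rng b

/-- A list `[eₙ, …, e₁]` of edges is a path when consecutive edges are composable. -/
def IsPathList (G : DirectedGraph) (μ : List G.E) : Prop := List.Chain' G.Composable μ

/-- The path `μ` has source `v` (vacuous for the empty path). -/
def SrcIs (G : DirectedGraph) (μ : List G.E) (v : G.V) : Prop :=
  ∀ e ∈ μ.getLast?, G.src e = v

/-- The path `μ`, regarded as a path with source `v`, has range `w`. -/
def RngIs (G : DirectedGraph) (v : G.V) (μ : List G.E) (w : G.V) : Prop :=
  match μ with
  | [] => v = w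
  | e :: _ => G.rng e = w

/-- `μ` is a path with source `v`. -/
def IsPathAt (G : DirectedGraph) (v : G.V) (μ : List G.E) : Prop :=
  G.IsPathList μ ∧ G.SrcIs μ v

/-- `μ` is a cycle at `v` : a path with source and range `v`. -/
def IsCycleAt (G : DirectedGraph) (v : G.V) (μ : List G.E) : Prop :=
  G.IsPathAt v μ ∧ G.RngIs v μ v

end DirectedGraph

/-- A Toeplitz–Cuntz–Krieger family for the directed graph `G` on the Hilbert space `H`:
pairwise orthogonal projections `Sv v`, partial isometries `Se e` with
`(Se e)* (Se e) = Sv (s e)`, and `∑_{e ∈ F} (Se e)(Se e)* ≤ Sv v` for finite `F ⊆ r⁻¹(v)`. -/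
structure TCKFamily (G : DirectedGraph) (H : Type) [NormedAddCommGroup H]
    [InnerProductSpace ℂ H] [CompleteSpace H] where
  Sv : G.V → H →L[ℂ] H
  Se : G.E → H →L[ℂ] H
  sv_sa : ∀ v, IsSelfAdjoint (Sv v)
  sv_idem : ∀ v, Sv v * Sv v = Sv v
  sv_orth : ∀ v w, v ≠ w → Sv v * Sv w = 0
  se_isom : ∀ e, ContinuousLinearMap.adjoint (Se e) * Se e = Sv (G.src e)
  tck_ineq : ∀ (v : G.V) (F : Finset G.E), (∀ e ∈ F, G.rng e = v) →
    ContinuousLinearMap.IsPositive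
      (Sv v - ∑ e ∈ F, Se e * ContinuousLinearMap.adjoint (Se e))

/-- The operator associated to a path `μ` with source `v`: the product of the edge
operators along `μ`, with the convention that the empty path at `v` gives `Sv v`. -/
noncomputable def pathOp {G : DirectedGraph} {H : Type} [NormedAddCommGroup H]
    [InnerProductSpace ℂ H] [CompleteSpace H]
    (S : TCKFamily G H) (v : G.V) (μ : List G.E) : H →L[ℂ] H :=
  match μ with
  | [] => S.Sv v
  | e :: rest => (((e :: rest)).map S.Se).prod

/-!
The TCK inequality with `F = {e}` makes `S_e*` vanish off the range of `S_{r(e)}`, and with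
`F = {e, f}` it gives `S_f* S_e = 0` for `f ≠ e`. Hence every `S_e*` kills `W_v`, and
`⟪S_μ x, S_ν y⟫` is evaluated by peeling off common leading edges with `S_e* S_e = S_{s(e)}`:
distinct leading edges give `S_f* S_e = 0`, a path that runs out first leaves some `S_e* x = 0`,
and two empty paths leave `⟪x, y⟫` with `S_v S_w = 0`.
-/

open ContinuousLinearMap
open scoped InnerProductSpace

theorem ContinuousLinearMap.sum_norm_sq_adjoint_apply_le {𝕜 E ι : Type*} [RCLike 𝕜]
    [NormedAddCommGroup E] [InnerProductSpace 𝕜 E] [CompleteSpace E]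
    {P : E →L[𝕜] E} {T : ι → E →L[𝕜] E} {F : Finset ι}
    (hpos : (P - ∑ i ∈ F, T i * adjoint (T i)).IsPositive) (z : E) :
    ∑ i ∈ F, ‖adjoint (T i) z‖ ^ 2 ≤ RCLike.re ⟪P z, z⟫_𝕜 := by
  have h := hpos.re_inner_nonneg_left z
  have hterm (i : ι) : RCLike.re ⟪(T i * adjoint (T i)) z, z⟫_𝕜 = ‖adjoint (T i) z‖ ^ 2 := by
    rw [mul_apply_eq_comp, ← adjoint_inner_right, inner_self_eq_norm_sq]
  simpa only [sub_apply, sum_apply, inner_sub_left, sum_inner, map_sub, map_sum, hterm,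
    sub_nonneg] using h

namespace DirectedGraph

variable {G : DirectedGraph} {v : G.V} {e : G.E} {μ : List G.E}

theorem IsPathAt.tail (h : G.IsPathAt v (e :: μ)) : G.IsPathAt v μ := by
  refine ⟨(List.isChain_cons.mp h.1).2, fun g hg => h.2 g ?_⟩
  cases μ with
  | nil => simp at hg
  | cons a l => rwa [List.getLast?_cons_cons]

theorem IsPathAt.rngIs_src (h : G.IsPathAt v (e :: μ)) : G.RngIs v μ (G.src e) := by
  cases μ with
  | nil => exact (h.2 e (by simp)).symm
  | cons g l => exact (List.isChain_cons_cons.mp h.1).1.symm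

end DirectedGraph

namespace TCKFamily

variable {H : Type} [NormedAddCommGroup H] [InnerProductSpace ℂ H] [CompleteSpace H]
  {G : DirectedGraph} (S : TCKFamily G H)

theorem sv_apply_sv (v : G.V) (z : H) : S.Sv v (S.Sv v z) = S.Sv v z :=
  congr($(S.sv_idem v) z)

theorem sv_apply_sv_of_ne {v w : G.V} (h : v ≠ w) (z : H) : S.Sv v (S.Sv w z) = 0 :=
  congr($(S.sv_orth v w h) z)

theorem adjoint_se_apply_se (e : G.E) (z : H) :
    adjoint (S.Se e) (S.Se e z) = S.Sv (G.src e) z :=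
  congr($(S.se_isom e) z)

theorem inner_sv_apply_left (v : G.V) (a b : H) : ⟪S.Sv v a, b⟫_ℂ = ⟪a, S.Sv v b⟫_ℂ :=
  (S.sv_sa v).isSymmetric a b

theorem norm_se_apply (e : G.E) (a : H) : ‖S.Se e a‖ = ‖S.Sv (G.src e) a‖ := by
  have hP : adjoint (S.Sv (G.src e)) = S.Sv (G.src e) := S.sv_sa _
  rw [← sq_eq_sq₀ (norm_nonneg _) (norm_nonneg _), apply_norm_sq_eq_inner_adjoint_left,
    apply_norm_sq_eq_inner_adjoint_left, hP]
  exact congr(RCLike.re ⟪$(Eq.trans (S.se_isom e) (S.sv_idem _).symm) a, a⟫_ℂ)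

theorem adjoint_se_apply_eq_zero {e : G.E} {z : H} (hz : S.Sv (G.rng e) z = 0) :
    adjoint (S.Se e) z = 0 := by
  have h := sum_norm_sq_adjoint_apply_le (S.tck_ineq (G.rng e) {e} (by simp)) z
  rw [Finset.sum_singleton, hz, inner_zero_left, map_zero] at h
  simpa using h

theorem sv_rng_apply_se (e : G.E) (z : H) : S.Sv (G.rng e) (S.Se e z) = S.Se e z := by
  set u := S.Se e z - S.Sv (G.rng e) (S.Se e z)
  have hu : S.Sv (G.rng e) u = 0 := by simp [u, sv_apply_sv]
  have hu' : ⟪u, u⟫_ℂ = 0 := by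
    rw [inner_sub_left, ← adjoint_inner_right, adjoint_se_apply_eq_zero S hu,
      inner_sv_apply_left, hu, inner_zero_right, inner_zero_right, sub_zero]
  exact (sub_eq_zero.mp (inner_self_eq_zero.mp hu')).symm

theorem adjoint_se_apply_se_of_ne {e f : G.E} (hfe : f ≠ e) (a : H) :
    adjoint (S.Se f) (S.Se e a) = 0 := by
  classical
  by_cases hr : G.rng f = G.rng e
  · have hpos := S.tck_ineq (G.rng e) {e, f} (by simp [hr])
    have h := sum_norm_sq_adjoint_apply_le hpos (S.Se e a)
    rw [Finset.sum_pair hfe.symm, sv_rng_apply_se, inner_self_eq_norm_sq, adjoint_se_apply_se,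
      ← norm_se_apply] at h
    simpa using h
  · apply adjoint_se_apply_eq_zero
    rw [← sv_rng_apply_se, sv_apply_sv_of_ne S hr]

theorem adjoint_se_apply_eq_zero_of_forall_rng_eq {v : G.V} {x : H} (hx : S.Sv v x = x)
    (hx' : ∀ e : G.E, G.rng e = v → adjoint (S.Se e) x = 0) (e : G.E) :
    adjoint (S.Se e) x = 0 := by
  by_cases h : G.rng e = v
  · exact hx' e h
  · apply adjoint_se_apply_eq_zero
    rw [← hx, sv_apply_sv_of_ne S h]

theorem sv_apply_prod_map_se {w u : G.V} {ν : List G.E} (hν : G.RngIs w ν u) {y : H}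
    (hy : S.Sv w y = y) : S.Sv u ((ν.map S.Se).prod y) = (ν.map S.Se).prod y := by
  cases ν with
  | nil => cases hν; simpa using hy
  | cons g l => cases hν; exact S.sv_rng_apply_se g _

theorem pathOp_apply_of_sv_apply_eq {v : G.V} {x : H} (hx : S.Sv v x = x) (μ : List G.E) :
    pathOp S v μ x = (μ.map S.Se).prod x := by
  cases μ with
  | nil => simpa [pathOp] using hx
  | cons e l => rfl

theorem inner_prod_map_se_apply_eq_zero {v w : G.V} {x y : H} (hx : S.Sv v x = x)
    (hx' : ∀ e : G.E, adjoint (S.Se e) x = 0) (hy : S.Sv w y = y)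
    (hy' : ∀ e : G.E, adjoint (S.Se e) y = 0) (μ : List G.E) {ν : List G.E}
    (hν : G.IsPathAt w ν) (hne : (v, μ) ≠ (w, ν)) :
    ⟪(μ.map S.Se).prod x, (ν.map S.Se).prod y⟫_ℂ = 0 := by
  induction μ generalizing ν with
  | nil =>
    cases ν with
    | nil =>
      have hvw : v ≠ w := fun h => hne (by rw [h])
      simp only [List.map_nil, List.prod_nil, one_apply_eq_self]
      rw [← hx, inner_sv_apply_left, ← hy, sv_apply_sv_of_ne S hvw, inner_zero_right]
    | cons f ν =>
      simp only [List.map_nil, List.prod_nil, one_apply_eq_self, List.map_cons, List.prod_cons,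
        mul_apply_eq_comp]
      rw [← adjoint_inner_left, hx', inner_zero_left]
  | cons e μ ih =>
    cases ν with
    | nil =>
      simp only [List.map_cons, List.prod_cons, mul_apply_eq_comp, List.map_nil, List.prod_nil,
        one_apply_eq_self]
      rw [← adjoint_inner_right, hy', inner_zero_right]
    | cons f ν =>
      simp only [List.map_cons, List.prod_cons, mul_apply_eq_comp]
      by_cases hef : e = f
      · subst hef
        rw [← adjoint_inner_right, adjoint_se_apply_se,
          S.sv_apply_prod_map_se hν.rngIs_src hy]
        exact ih hν.tail (by simpa using hne)
      · rw [← adjoint_inner_left, adjoint_se_apply_se_of_ne S (Ne.symm hef), inner_zero_left]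

end TCKFamily

theorem stmt5_general {H : Type} [NormedAddCommGroup H] [InnerProductSpace ℂ H] [CompleteSpace H]
    (G : DirectedGraph) (S : TCKFamily G H)
    {v w : G.V} {x y : H}
    (hx1 : S.Sv v x = x)
    (hx2 : ∀ e : G.E, G.rng e = v → ContinuousLinearMap.adjoint (S.Se e) x = 0)
    (hy1 : S.Sv w y = y)
    (hy2 : ∀ e : G.E, G.rng e = w → ContinuousLinearMap.adjoint (S.Se e) y = 0)
    {μ ν : List G.E} (hν : G.IsPathAt w ν)
    (hne : (v, μ) ≠ (w, ν)) :
    (@inner ℂ H _ (pathOp S v μ x) (pathOp S w ν y)) = 0 := by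
  rw [S.pathOp_apply_of_sv_apply_eq hx1, S.pathOp_apply_of_sv_apply_eq hy1]
  exact S.inner_prod_map_se_apply_eq_zero hx1
    (S.adjoint_se_apply_eq_zero_of_forall_rng_eq hx1 hx2) hy1
    (S.adjoint_se_apply_eq_zero_of_forall_rng_eq hy1 hy2) μ hν hne

/-- Let `S` be a nondegenerate TCK family. For each vertex `v`,
the space `W_v = (S_v − ∑_{r(e)=v} S_e S_e*) H`, i.e. the set of `x` with `S_v x = x`
and `S_e* x = 0` for all `e ∈ r⁻¹(v)`, is a wandering subspace supported on `v`:
for `(v, μ) ≠ (w, ν)` (paths `μ, ν` with sources `v, w`), `S_μ W_v ⟂ S_ν W_w`. -/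
theorem stmt5 {H : Type} [NormedAddCommGroup H] [InnerProductSpace ℂ H] [CompleteSpace H]
    (G : DirectedGraph) (S : TCKFamily G H)
    (hnd : ∀ x : H, (∀ v, S.Sv v x = 0) → x = 0)
    {v w : G.V} {x y : H}
    (hx1 : S.Sv v x = x)
    (hx2 : ∀ e : G.E, G.rng e = v → ContinuousLinearMap.adjoint (S.Se e) x = 0)
    (hy1 : S.Sv w y = y)
    (hy2 : ∀ e : G.E, G.rng e = w → ContinuousLinearMap.adjoint (S.Se e) y = 0)
    {μ ν : List G.E} (hμ : G.IsPathAt v μ) (hν : G.IsPathAt w ν)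
    (hne : (v, μ) ≠ (w, ν)) :
    (@inner ℂ H _ (pathOp S v μ x) (pathOp S w ν y)) = 0 :=
  stmt5_general G S hx1 hx2 hy1 hy2 hν hne
end

section
/- Let S be a nondegenerate TCK family for G on H, and suppose x ∈ S_v H is a wandering vector for the compressed free semigroup algebra on S_v H generated by the operators S_μ|_{S_v H} for cycles μ at v (i.e., {S_μ x : μ a cycle at v} is orthonormal up to the norm of x, meaning ⟨S_μ x, S_ν x⟩ = 0 for distinct cycles μ, ν at v). Then x is a wandering vector for the full family: ⟨S_μ x, S_ν x⟩ = 0 for all distinct paths μ, ν ∈ F_G^+ with source v. -/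
open ContinuousLinearMap
open scoped InnerProductSpace

section CStarRing

variable {A : Type*} [NonUnitalNormedRing A] [StarRing A] [CStarRing A]

theorem mul_star_mul_self_of_isIdempotentElem {a : A} (h : IsIdempotentElem (star a * a)) :
    a * (star a * a) = a := by
  have hpp : (star a * a) * (star a * a) = star a * a := h
  have hdefect : star (a * (star a * a) - a) * (a * (star a * a) - a) = 0 := by
    simp only [star_sub, star_mul, star_star, sub_mul, mul_sub]
    simp only [← mul_assoc] at hpp ⊢
    rw [hpp, hpp]
    simp
  exact sub_eq_zero.mp ((CStarRing.star_mul_self_eq_zero_iff _).mp hdefect)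

theorem isStarProjection_mul_star_self {a : A} (h : IsIdempotentElem (star a * a)) :
    IsStarProjection (a * star a) where
  isIdempotentElem := by
    rw [IsIdempotentElem, mul_assoc, ← mul_assoc (star a), ← mul_assoc,
      mul_star_mul_self_of_isIdempotentElem h]
  isSelfAdjoint := by rw [IsSelfAdjoint, star_mul, star_star]

end CStarRing

theorem IsStarProjection.mul_eq_zero_of_add_le_one {A : Type*} [CStarAlgebra A] [PartialOrder A]
    [StarOrderedRing A] {p q : A} (hp : IsStarProjection p) (hq : IsStarProjection q)
    (hpq : p + q ≤ 1) : p * q = 0 := by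
  have h : p * (1 - q) = p :=
    (hp.le_iff_mul_eq_left hq.one_sub).mp (le_sub_iff_add_le.mpr hpq)
  rwa [mul_sub, mul_one, sub_eq_self] at h

namespace DirectedGraph

variable {G : DirectedGraph} {v : G.V} {e : G.E} {μ : List G.E}

theorem isCycleAt_nil (G : DirectedGraph) (v : G.V) : G.IsCycleAt v [] :=
  ⟨⟨List.isChain_nil, by simp [SrcIs]⟩, rfl⟩

end DirectedGraph

namespace TCKFamily

variable {G : DirectedGraph} {H : Type} [NormedAddCommGroup H] [InnerProductSpace ℂ H]
  [CompleteSpace H] (S : TCKFamily G H)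

theorem isStarProjection_Sv (v : G.V) : IsStarProjection (S.Sv v) :=
  ⟨S.sv_idem v, S.sv_sa v⟩

theorem star_Se_mul_Se (e : G.E) : star (S.Se e) * S.Se e = S.Sv (G.src e) := by
  rw [star_eq_adjoint, S.se_isom]

theorem Se_mul_star_Se_mul_Se (e : G.E) : S.Se e * star (S.Se e) * S.Se e = S.Se e := by
  rw [mul_assoc]
  exact mul_star_mul_self_of_isIdempotentElem (S.star_Se_mul_Se e ▸ S.sv_idem _)

theorem isStarProjection_Se_mul_star (e : G.E) : IsStarProjection (S.Se e * star (S.Se e)) :=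
  isStarProjection_mul_star_self (S.star_Se_mul_Se e ▸ S.sv_idem _)

theorem sum_Se_mul_star_le_Sv {v : G.V} {F : Finset G.E} (hF : ∀ e ∈ F, G.rng e = v) :
    ∑ e ∈ F, S.Se e * star (S.Se e) ≤ S.Sv v := by
  rw [le_def]
  simpa only [star_eq_adjoint] using S.tck_ineq v F hF

theorem Se_mul_star_le_Sv_rng (e : G.E) : S.Se e * star (S.Se e) ≤ S.Sv (G.rng e) := by
  simpa using S.sum_Se_mul_star_le_Sv (F := {e}) (by simp)

theorem Sv_rng_mul_Se_mul_star (e : G.E) :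
    S.Sv (G.rng e) * (S.Se e * star (S.Se e)) = S.Se e * star (S.Se e) :=
  ((S.isStarProjection_Se_mul_star e).le_iff_mul_eq_right (S.isStarProjection_Sv _)).mp
    (S.Se_mul_star_le_Sv_rng e)

theorem Se_mul_star_mul_Sv_rng (e : G.E) :
    S.Se e * star (S.Se e) * S.Sv (G.rng e) = S.Se e * star (S.Se e) :=
  ((S.isStarProjection_Se_mul_star e).le_iff_mul_eq_left (S.isStarProjection_Sv _)).mp
    (S.Se_mul_star_le_Sv_rng e)

theorem Sv_rng_mul_Se (e : G.E) : S.Sv (G.rng e) * S.Se e = S.Se e := by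
  rw [← S.Se_mul_star_Se_mul_Se e, ← mul_assoc, S.Sv_rng_mul_Se_mul_star]

theorem Se_mul_star_mul_Se_mul_star_of_ne {e f : G.E} (hef : e ≠ f) :
    S.Se e * star (S.Se e) * (S.Se f * star (S.Se f)) = 0 := by
  classical
  by_cases hr : G.rng e = G.rng f
  · refine (S.isStarProjection_Se_mul_star e).mul_eq_zero_of_add_le_one
      (S.isStarProjection_Se_mul_star f) ((S.isStarProjection_Sv (G.rng f)).le_one.trans' ?_)
    rw [← Finset.sum_pair hef (f := fun g => S.Se g * star (S.Se g))]
    exact S.sum_Se_mul_star_le_Sv (by simp [hr])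
  · rw [← S.Se_mul_star_mul_Sv_rng e, ← S.Sv_rng_mul_Se_mul_star f, mul_assoc,
      ← mul_assoc (S.Sv _), S.sv_orth _ _ hr, zero_mul, mul_zero]

theorem star_Se_mul_Se_of_ne {e f : G.E} (hef : e ≠ f) : star (S.Se e) * S.Se f = 0 := by
  have hstar : star (S.Se e) * (S.Se e * star (S.Se e)) = star (S.Se e) := by
    simpa only [star_mul, star_star, mul_assoc] using congrArg star (S.Se_mul_star_Se_mul_Se e)
  calc star (S.Se e) * S.Se f
      = star (S.Se e) * (S.Se e * star (S.Se e) * (S.Se f * star (S.Se f))) * S.Se f := by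
        rw [mul_assoc, mul_assoc, S.Se_mul_star_Se_mul_Se f, ← mul_assoc, hstar]
    _ = 0 := by rw [S.Se_mul_star_mul_Se_mul_star_of_ne hef, mul_zero, zero_mul]

theorem inner_Se_Se_of_ne {e f : G.E} (hef : e ≠ f) (a b : H) :
    ⟪S.Se e a, S.Se f b⟫_ℂ = 0 := by
  rw [← adjoint_inner_right, ← mul_apply_eq_comp, ← star_eq_adjoint, S.star_Se_mul_Se_of_ne hef,
    zero_apply, inner_zero_right]

theorem inner_Se_Se (e : G.E) (a b : H) : ⟪S.Se e a, S.Se e b⟫_ℂ = ⟪a, S.Sv (G.src e) b⟫_ℂ := by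
  rw [← adjoint_inner_right, ← mul_apply_eq_comp, S.se_isom]

theorem inner_eq_zero_of_Sv_of_ne {v w : G.V} (hvw : v ≠ w) {a b : H} (ha : S.Sv v a = a)
    (hb : S.Sv w b = b) : ⟪a, b⟫_ℂ = 0 := by
  rw [← ha, ← hb, ← adjoint_inner_right, (S.sv_sa v).adjoint_eq, ← mul_apply_eq_comp,
    S.sv_orth v w hvw, zero_apply, inner_zero_right]

end TCKFamily

section pathOp

variable {G : DirectedGraph} {H : Type} [NormedAddCommGroup H] [InnerProductSpace ℂ H]
  [CompleteSpace H] (S : TCKFamily G H) {v : G.V} {x : H}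

theorem pathOp_nil : pathOp S v [] = S.Sv v := rfl

theorem pathOp_cons_apply (hx : S.Sv v x = x) (e : G.E) (μ : List G.E) :
    pathOp S v (e :: μ) x = S.Se e (pathOp S v μ x) := by
  cases μ with
  | nil => simp [pathOp, hx]
  | cons f μ => rfl

theorem Sv_pathOp_apply (hx : S.Sv v x = x) {μ : List G.E} {w : G.V} (hμ : G.RngIs v μ w) :
    S.Sv w (pathOp S v μ x) = pathOp S v μ x := by
  cases μ with
  | nil =>
    cases hμ
    rw [pathOp_nil, hx, hx]
  | cons e μ => rw [pathOp_cons_apply S hx, ← mul_apply_eq_comp, ← hμ, S.Sv_rng_mul_Se]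

theorem inner_pathOp_cons_self_eq_zero (hx : S.Sv v x = x)
    (hcycle : ∀ f ν, G.IsCycleAt v (f :: ν) → ⟪pathOp S v (f :: ν) x, x⟫_ℂ = 0)
    {f : G.E} {ν : List G.E} (hν : G.IsPathAt v (f :: ν)) :
    ⟪pathOp S v (f :: ν) x, x⟫_ℂ = 0 := by
  by_cases hf : G.rng f = v
  · exact hcycle f ν ⟨hν, hf⟩
  · exact S.inner_eq_zero_of_Sv_of_ne hf (Sv_pathOp_apply S hx rfl) hx

theorem inner_pathOp_eq_zero_of_ne (hx : S.Sv v x = x)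
    (hpath : ∀ f ν, G.IsPathAt v (f :: ν) → ⟪pathOp S v (f :: ν) x, x⟫_ℂ = 0) :
    ∀ μ ν : List G.E, G.IsPathAt v μ → G.IsPathAt v ν → μ ≠ ν →
      ⟪pathOp S v μ x, pathOp S v ν x⟫_ℂ = 0
  | [], [], _, _, hne => absurd rfl hne
  | [], f :: ν, _, hν, _ => by rw [pathOp_nil, hx]; exact inner_eq_zero_symm.mp (hpath f ν hν)
  | e :: μ, [], hμ, _, _ => by rw [pathOp_nil, hx]; exact hpath e μ hμ
  | e :: μ, f :: ν, hμ, hν, hne => by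
    rw [pathOp_cons_apply S hx, pathOp_cons_apply S hx]
    obtain rfl | hef := eq_or_ne e f
    · rw [S.inner_Se_Se, Sv_pathOp_apply S hx hν.rngIs_src]
      exact inner_pathOp_eq_zero_of_ne hx hpath μ ν hμ.tail hν.tail (fun h => hne (h ▸ rfl))
    · exact S.inner_Se_Se_of_ne hef _ _

end pathOp

theorem stmt6_general {H : Type} [NormedAddCommGroup H] [InnerProductSpace ℂ H] [CompleteSpace H]
    (G : DirectedGraph) (S : TCKFamily G H)
    {v : G.V} {x : H} (hx : S.Sv v x = x)
    (hwand : ∀ μ ν : List G.E, G.IsCycleAt v μ → G.IsCycleAt v ν → μ ≠ ν →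
      (@inner ℂ H _ (pathOp S v μ x) (pathOp S v ν x)) = 0) :
    ∀ μ ν : List G.E, G.IsPathAt v μ → G.IsPathAt v ν → μ ≠ ν →
      (@inner ℂ H _ (pathOp S v μ x) (pathOp S v ν x)) = 0 := by
  have hcycle : ∀ f ν, G.IsCycleAt v (f :: ν) → ⟪pathOp S v (f :: ν) x, x⟫_ℂ = 0 := by
    intro f ν hc
    simpa only [pathOp_nil, hx] using
      hwand _ [] hc (G.isCycleAt_nil v) (List.cons_ne_nil f ν)
  exact inner_pathOp_eq_zero_of_ne S hx fun f ν hν =>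
    inner_pathOp_cons_self_eq_zero S hx hcycle hν

/-- Let `S` be a nondegenerate TCK family and `x ∈ S_v H`. If
`⟨S_μ x, S_ν x⟩ = 0` for all distinct cycles `μ, ν` at `v` (i.e. `x` is wandering for
the compressed free semigroup algebra at `v`), then `⟨S_μ x, S_ν x⟩ = 0` for all
distinct paths `μ, ν` with source `v` (i.e. `x` is wandering for the full family). -/
theorem stmt6 {H : Type} [NormedAddCommGroup H] [InnerProductSpace ℂ H] [CompleteSpace H]
    (G : DirectedGraph) (S : TCKFamily G H)
    (hnd : ∀ x : H, (∀ v, S.Sv v x = 0) → x = 0)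
    {v : G.V} {x : H} (hx : S.Sv v x = x)
    (hwand : ∀ μ ν : List G.E, G.IsCycleAt v μ → G.IsCycleAt v ν → μ ≠ ν →
      (@inner ℂ H _ (pathOp S v μ x) (pathOp S v ν x)) = 0) :
    ∀ μ ν : List G.E, G.IsPathAt v μ → G.IsPathAt v ν → μ ≠ ν →
      (@inner ℂ H _ (pathOp S v μ x) (pathOp S v ν x)) = 0 :=
  stmt6_general G S hx hwand
end

section
/- Let C_n be the cycle graph on vertices v_1,…,v_n with edges e_i from v_i to v_{i+1 mod n}. Every CK family S = (S_v, S_e) for C_n on a Hilbert space H is unitarily equivalent to one realized on ℂ^n ⊗ K for a Hilbert space K, with S_{e_i} ≅ E_{i,i+1} ⊗ I for 1 ≤ i < n and S_{e_n} ≅ E_{n,1} ⊗ V for some unitary V on K, where E_{i,j} are matrix units. -/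
/-- The cycle graph `Cₙ` on vertices `Fin n`, with edge `i` from `i` to `i + 1 (mod n)`. -/
def cycleGraph (n : ℕ) [NeZero n] : DirectedGraph :=
  { V := Fin n, E := Fin n, src := id, rng := fun i => i + 1 }

/-!
Let `C k = S_{e_{k-1}} ⋯ S_{e_0} S_{v_0}` be the partial isometry along the path of length `k`
starting at `v_0`. The Cuntz–Krieger relations make `C k` an isometry from `K = S_{v_0} H` onto
`S_{v_k} H`; since the `S_{v_k}` are orthogonal projections summing to `1`, the map
`x ↦ ((C k)^* x)_{k < n}` is a unitary `H ≃ ⊕ⁿ K`. Under it `S_{e_i}` moves the `i`-th summand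
identically onto the `(i + 1)`-st, except for the last edge, which acts through the holonomy
`C n` of the whole loop, a unitary of `K`.
-/

open ContinuousLinearMap Fin.NatCast
open scoped InnerProductSpace

section CStarRing

variable {A : Type*} [NonUnitalNormedRing A] [StarRing A] [CStarRing A] {p T : A}

theorem IsStarProjection.mul_eq_self_of_star_mul_self_eq (hp : IsStarProjection p)
    (h : star T * T = p) : T * p = T := by
  have h0 : star (T - T * p) * (T - T * p) = 0 := by
    rw [star_sub, star_mul, hp.isSelfAdjoint.star_eq]
    calc (star T - p * star T) * (T - T * p)
        = star T * T - star T * T * p - p * (star T * T) + p * (star T * T) * p := by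
          noncomm_ring
      _ = 0 := by simp only [h, hp.isIdempotentElem.eq, sub_self, zero_sub, neg_add_cancel]
  exact (sub_eq_zero.mp ((CStarRing.star_mul_self_eq_zero_iff _).mp h0)).symm

theorem IsStarProjection.mul_eq_self_of_mul_star_self_eq (hp : IsStarProjection p)
    (h : T * star T = p) : p * T = T := by
  simpa only [star_mul, star_star, hp.isSelfAdjoint.star_eq] using
    congr_arg star (hp.mul_eq_self_of_star_mul_self_eq (T := star T) (by rwa [star_star]))

end CStarRing

namespace ContinuousLinearMap

variable {𝕜 E : Type*} [RCLike 𝕜] [NormedAddCommGroup E] [InnerProductSpace 𝕜 E]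

theorem mem_range_iff_of_isIdempotentElem {q : E →L[𝕜] E} (hq : IsIdempotentElem q) {y : E} :
    y ∈ q.range ↔ q y = y :=
  LinearMap.IsIdempotentElem.mem_range_iff (p := (q : E →ₗ[𝕜] E)) hq.toLinearMap

variable [CompleteSpace E]

theorem adjoint_mul (A B : E →L[𝕜] E) : adjoint (A * B) = adjoint B * adjoint A :=
  adjoint_comp A B

theorem adjoint_mul_eq_adjoint_of_mul_eq {p T : E →L[𝕜] E} (hp : IsSelfAdjoint p)
    (h : p * T = T) : adjoint T * p = adjoint T := by
  rw [← hp.adjoint_eq, ← adjoint_mul, h]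

theorem mul_adjoint_eq_adjoint_of_mul_eq {p T : E →L[𝕜] E} (hp : IsSelfAdjoint p)
    (h : T * p = T) : p * adjoint T = adjoint T := by
  rw [← hp.adjoint_eq, ← adjoint_mul, h]

section PartialIsometry

variable {T p q : E →L[𝕜] E} (hp : IsStarProjection p) (h₁ : adjoint T * T = p)
include hp h₁

theorem mul_eq_self_of_adjoint_mul_self_eq : T * p = T :=
  hp.mul_eq_self_of_star_mul_self_eq (by rw [star_eq_adjoint, h₁])

variable (h₂ : T * adjoint T = q)
include h₂

theorem mul_eq_self_of_mul_adjoint_self_eq : q * T = T := by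
  rw [← h₂, mul_assoc, h₁, mul_eq_self_of_adjoint_mul_self_eq hp h₁]

theorem isIdempotentElem_of_mul_adjoint_self_eq : IsIdempotentElem q := by
  rw [IsIdempotentElem]
  nth_rw 2 [← h₂]
  rw [← mul_assoc, mul_eq_self_of_mul_adjoint_self_eq hp h₁ h₂, h₂]

noncomputable def partialIsometryEquiv : p.range ≃ₗᵢ[𝕜] q.range :=
  have hq := isIdempotentElem_of_mul_adjoint_self_eq hp h₁ h₂
  LinearIsometryEquiv.ofSurjective
    (LinearMap.isometryOfInner (LinearMap.restrict (q := q.range) (T : E →ₗ[𝕜] E)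
        fun x _ ↦ (mem_range_iff_of_isIdempotentElem hq).2
          congr($(mul_eq_self_of_mul_adjoint_self_eq hp h₁ h₂) x))
      fun x y ↦ by
        rw [Submodule.coe_inner, Submodule.coe_inner, LinearMap.coe_restrict_apply,
          LinearMap.coe_restrict_apply, coe_coe, ← adjoint_inner_right, ← mul_apply_eq_comp, h₁,
          (mem_range_iff_of_isIdempotentElem hp.isIdempotentElem).1 y.2])
    fun y ↦ ⟨⟨adjoint T y, (mem_range_iff_of_isIdempotentElem hp.isIdempotentElem).2
        congr($(mul_adjoint_eq_adjoint_of_mul_eq hp.isSelfAdjoint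
          (mul_eq_self_of_adjoint_mul_self_eq hp h₁)) y)⟩,
      Subtype.ext <| by
        simp only [LinearMap.coe_isometryOfInner, LinearMap.coe_restrict_apply, coe_coe]
        rw [← mul_apply_eq_comp, h₂, (mem_range_iff_of_isIdempotentElem hq).1 y.2]⟩

theorem coe_partialIsometryEquiv_apply (x : p.range) :
    (partialIsometryEquiv hp h₁ h₂ x : E) = T x :=
  rfl

end PartialIsometry

section Decomposition

variable {ι : Type*} [Fintype ι] [DecidableEq ι] {C : ι → E →L[𝕜] E} {q : E →L[𝕜] E}
  (hsum : ∑ a, C a * adjoint (C a) = 1)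
  (horth : ∀ a b, adjoint (C a) * C b = if a = b then q else 0)
include hsum horth

theorem mul_adjoint_eq_adjoint_of_sum_mul_adjoint_eq_one (a : ι) :
    q * adjoint (C a) = adjoint (C a) :=
  calc q * adjoint (C a) = ∑ b, adjoint (C a) * C b * adjoint (C b) := by
        simp only [horth, ite_mul, zero_mul, Finset.sum_ite_eq, Finset.mem_univ, if_true]
    _ = adjoint (C a) := by simp only [mul_assoc, ← Finset.mul_sum, hsum, mul_one]

variable (hq : IsIdempotentElem q)
include hq

noncomputable def equivPiLpOfIsometries : E ≃ₗᵢ[𝕜] PiLp 2 (fun _ : ι ↦ q.range) :=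
  LinearIsometryEquiv.ofSurjective
    (LinearMap.isometryOfInner
      { toFun x := WithLp.toLp 2 fun a ↦ ⟨adjoint (C a) x, (mem_range_iff_of_isIdempotentElem hq).2
          congr($(mul_adjoint_eq_adjoint_of_sum_mul_adjoint_eq_one hsum horth a) x)⟩
        map_add' x y := by ext; simp
        map_smul' c x := by ext; simp }
      fun x y ↦ by
        simp only [LinearMap.coe_mk, AddHom.coe_mk, PiLp.inner_apply, Submodule.coe_inner,
          ← adjoint_inner_right, adjoint_adjoint, ← mul_apply_eq_comp, ← inner_sum, ← sum_apply,
          hsum, one_apply_eq_self])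
    fun y ↦ ⟨∑ b, C b (y b), by
      ext a
      change adjoint (C a) (∑ b, C b (y b)) = y a
      simp only [map_sum, ← mul_apply_eq_comp, horth, DFunLike.ite_apply, zero_apply,
        Finset.sum_ite_eq, Finset.mem_univ, if_true]
      exact (mem_range_iff_of_isIdempotentElem hq).1 (y a).2⟩

theorem equivPiLpOfIsometries_apply (x : E) (a : ι) :
    (equivPiLpOfIsometries hsum horth hq x a : E) = adjoint (C a) x :=
  rfl

end Decomposition

end ContinuousLinearMap

section Cycle

variable {𝕜 H : Type*} [RCLike 𝕜] [NormedAddCommGroup H] [InnerProductSpace 𝕜 H]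
  [CompleteSpace H] {n : ℕ} [NeZero n] (P s : Fin n → H →L[𝕜] H)

/-- The index `k` of `s k` is read mod `n`, so `cyclePath P s n` is the holonomy of the whole
loop at `0`. -/
noncomputable def cyclePath : ℕ → H →L[𝕜] H
  | 0 => P 0
  | k + 1 => s k * cyclePath k

variable {P s} (hP : ∀ v, IsStarProjection (P v)) (hs : ∀ i, adjoint (s i) * s i = P i)
  (hck : ∀ i, s i * adjoint (s i) = P (i + 1))
include hP hs hck

theorem cyclePath_mul_adjoint (k : ℕ) :
    cyclePath P s k * adjoint (cyclePath P s k) = P k := by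
  induction k with
  | zero =>
    rw [cyclePath, Nat.cast_zero, (hP 0).isSelfAdjoint.adjoint_eq, (hP 0).isIdempotentElem.eq]
  | succ k ih =>
    calc cyclePath P s (k + 1) * adjoint (cyclePath P s (k + 1))
        = s k * (cyclePath P s k * adjoint (cyclePath P s k)) * adjoint (s k) := by
          rw [cyclePath, adjoint_mul]; noncomm_ring
      _ = s k * adjoint (s k) := by rw [ih, mul_eq_self_of_adjoint_mul_self_eq (hP k) (hs k)]
      _ = P (k + 1 : ℕ) := by rw [hck, Nat.cast_succ]

theorem proj_mul_cyclePath (k : ℕ) : P k * cyclePath P s k = cyclePath P s k :=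
  (hP k).mul_eq_self_of_mul_star_self_eq
    (by rw [star_eq_adjoint, cyclePath_mul_adjoint hP hs hck])

theorem adjoint_cyclePath_mul_self (k : ℕ) :
    adjoint (cyclePath P s k) * cyclePath P s k = P 0 := by
  induction k with
  | zero => rw [cyclePath, (hP 0).isSelfAdjoint.adjoint_eq, (hP 0).isIdempotentElem.eq]
  | succ k ih =>
    rw [cyclePath, adjoint_mul, mul_assoc, ← mul_assoc (adjoint (s k)), hs,
      proj_mul_cyclePath hP hs hck, ih]

theorem sum_cyclePath_mul_adjoint (hsum : ∑ v, P v = 1) :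
    ∑ a : Fin n, cyclePath P s a * adjoint (cyclePath P s a) = 1 := by
  simpa only [cyclePath_mul_adjoint hP hs hck, Fin.cast_val_eq_self] using hsum

theorem adjoint_cyclePath_succ_mul (i : Fin n) (h : (i : ℕ) + 1 < n) :
    adjoint (cyclePath P s (i + 1 : Fin n)) * s i = adjoint (cyclePath P s i) := by
  rw [Fin.val_add_one_of_lt' h, cyclePath, Fin.cast_val_eq_self, adjoint_mul, mul_assoc, hs,
    adjoint_mul_eq_adjoint_of_mul_eq (hP i).isSelfAdjoint]
  simpa only [Fin.cast_val_eq_self] using proj_mul_cyclePath hP hs hck i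

theorem adjoint_cyclePath_succ_mul_of_eq (i : Fin n) (h : (i : ℕ) + 1 = n) :
    adjoint (cyclePath P s (i + 1 : Fin n)) * s i =
      cyclePath P s n * adjoint (cyclePath P s i) := by
  have hi : i + 1 = 0 := by ext; simp [Fin.val_add, h]
  have hsi : P 0 * s i = s i := hi ▸ mul_eq_self_of_mul_adjoint_self_eq (hP i) (hs i) (hck i)
  rw [hi, Fin.val_zero, cyclePath, (hP 0).isSelfAdjoint.adjoint_eq, hsi,
    congrArg (cyclePath P s) h.symm, cyclePath, Fin.cast_val_eq_self, mul_assoc,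
    cyclePath_mul_adjoint hP hs hck, Fin.cast_val_eq_self,
    mul_eq_self_of_adjoint_mul_self_eq (hP i) (hs i)]

variable (hPorth : ∀ v w, v ≠ w → P v * P w = 0)
include hPorth

theorem adjoint_cyclePath_mul_proj (a v : Fin n) :
    adjoint (cyclePath P s a) * P v = if a = v then adjoint (cyclePath P s a) else 0 := by
  have ha : adjoint (cyclePath P s a) * P a = adjoint (cyclePath P s a) :=
    adjoint_mul_eq_adjoint_of_mul_eq (hP a).isSelfAdjoint
      (by simpa only [Fin.cast_val_eq_self] using proj_mul_cyclePath hP hs hck a)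
  split_ifs with hav
  · rwa [← hav]
  · rw [← ha, mul_assoc, hPorth a v hav, mul_zero]

theorem adjoint_cyclePath_mul_cyclePath (a b : Fin n) :
    adjoint (cyclePath P s a) * cyclePath P s b = if a = b then P 0 else 0 := by
  split_ifs with hab
  · rw [hab, adjoint_cyclePath_mul_self hP hs hck]
  · rw [← proj_mul_cyclePath hP hs hck b, Fin.cast_val_eq_self, ← mul_assoc,
      adjoint_cyclePath_mul_proj hP hs hck hPorth, if_neg hab, zero_mul]

theorem adjoint_cyclePath_mul_of_ne (a i : Fin n) (h : a ≠ i + 1) :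
    adjoint (cyclePath P s a) * s i = 0 := by
  rw [← mul_eq_self_of_mul_adjoint_self_eq (hP i) (hs i) (hck i), ← mul_assoc,
    adjoint_cyclePath_mul_proj hP hs hck hPorth, if_neg h, zero_mul]

theorem adjoint_cyclePath_mul_of_lt (a i : Fin n) (h : (i : ℕ) + 1 < n) :
    adjoint (cyclePath P s a) * s i = if a = i + 1 then adjoint (cyclePath P s i) else 0 := by
  split_ifs with ha
  · rw [ha, adjoint_cyclePath_succ_mul hP hs hck i h]
  · exact adjoint_cyclePath_mul_of_ne hP hs hck hPorth a i ha

theorem adjoint_cyclePath_mul_of_eq (a i : Fin n) (h : (i : ℕ) + 1 = n) :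
    adjoint (cyclePath P s a) * s i =
      if a = i + 1 then cyclePath P s n * adjoint (cyclePath P s i) else 0 := by
  split_ifs with ha
  · rw [ha, adjoint_cyclePath_succ_mul_of_eq hP hs hck i h]
  · exact adjoint_cyclePath_mul_of_ne hP hs hck hPorth a i ha

end Cycle

/-- Every (nondegenerate) Cuntz–Krieger family `S` for the cycle
graph `Cₙ` on a Hilbert space `H` is unitarily equivalent to the model on
`ℂⁿ ⊗ K ≅ ⊕ⁿ K`: there exist a Hilbert space `K`, a unitary `Vu` on `K` and a
unitary `U : H ≅ ⊕ⁿ K` with `U S_{e_i} U⁻¹ = E_{i,i+1} ⊗ I` for `i + 1 < n`,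
`U S_{e_n} U⁻¹ = E_{n,1} ⊗ Vu`, and `U S_{v_i} U⁻¹ = E_{i,i} ⊗ I`. -/
theorem stmt11 (n : ℕ) [NeZero n] {H : Type} [NormedAddCommGroup H]
    [InnerProductSpace ℂ H] [CompleteSpace H]
    (S : TCKFamily (cycleGraph n) H)
    (hck : ∀ i : Fin n, S.Se i * ContinuousLinearMap.adjoint (S.Se i) = S.Sv (i + 1))
    (hnd : ∑ v : Fin n, S.Sv v = 1) :
    ∃ (K : Type) (_ : NormedAddCommGroup K) (_ : InnerProductSpace ℂ K)
      (_ : CompleteSpace K) (Vu : K ≃ₗᵢ[ℂ] K)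
      (U : H ≃ₗᵢ[ℂ] PiLp 2 (fun _ : Fin n => K)),
      (∀ (v : Fin n) (x : H) (a : Fin n),
        U (S.Sv v x) a = if a = v then U x a else 0) ∧
      (∀ (i : Fin n) (x : H) (a : Fin n), (i : ℕ) + 1 < n →
        U (S.Se i x) a = if a = i + 1 then U x i else 0) ∧
      (∀ (i : Fin n) (x : H) (a : Fin n), (i : ℕ) + 1 = n →
        U (S.Se i x) a = if a = i + 1 then Vu (U x i) else 0) := by
  -- `S.Sv` and `S.Se` are indexed by `(cycleGraph n).V` and `.E`, which rewriting does not see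
  -- through; restated over `Fin n` they fit the lemmas on `cyclePath`.
  set P : Fin n → H →L[ℂ] H := S.Sv
  set s : Fin n → H →L[ℂ] H := S.Se
  have hP : ∀ v, IsStarProjection (P v) := fun v ↦ ⟨S.sv_idem v, S.sv_sa v⟩
  have hs : ∀ i, adjoint (s i) * s i = P i := S.se_isom
  let U := equivPiLpOfIsometries (sum_cyclePath_mul_adjoint hP hs hck hnd)
    (adjoint_cyclePath_mul_cyclePath hP hs hck S.sv_orth) (hP 0).isIdempotentElem
  let V := partialIsometryEquiv (hP 0) (adjoint_cyclePath_mul_self hP hs hck n)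
    (by rw [cyclePath_mul_adjoint hP hs hck, Fin.natCast_self])
  refine ⟨(P 0).range, _, _, (hP 0).isIdempotentElem.isClosed_range.completeSpace_coe, V, U,
    fun v x a ↦ Subtype.ext ?_, fun i x a hi ↦ Subtype.ext ?_, fun i x a hi ↦ Subtype.ext ?_⟩
  · simp only [U, equivPiLpOfIsometries_apply, apply_ite Subtype.val, ZeroMemClass.coe_zero,
      ← mul_apply_eq_comp, adjoint_cyclePath_mul_proj hP hs hck S.sv_orth]
    split_ifs <;> rfl
  · simp only [U, equivPiLpOfIsometries_apply, apply_ite Subtype.val, ZeroMemClass.coe_zero,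
      ← mul_apply_eq_comp, adjoint_cyclePath_mul_of_lt hP hs hck S.sv_orth a i hi]
    split_ifs <;> rfl
  · simp only [U, V, equivPiLpOfIsometries_apply, coe_partialIsometryEquiv_apply,
      apply_ite Subtype.val, ZeroMemClass.coe_zero, ← mul_apply_eq_comp,
      adjoint_cyclePath_mul_of_eq hP hs hck S.sv_orth a i hi]
    split_ifs <;> rfl
end

section
/- Let S = (S_v, S_e) be an atomic TCK family for a directed graph G with orthonormal basis {ξ_{v,i}}, and let ξ = ξ_{v,i} be a basis vector. If there is no nontrivial path μ ∈ F_G^+ with s(μ) = r(μ) = v and S_μ ξ = λ ξ for some scalar λ ∈ 𝕋, then ξ is a wandering vector: {S_μ ξ : μ ∈ F_G^+, s(μ) = v} is an orthogonal family of unit vectors (those which are nonzero). -/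
/-- Auxiliary: iterate the edge index maps and accumulate the scalar along a path. -/
def stmt14Aux {E I : Type} (π : E → I → I) (lam : E → I → ℂ) (i₀ : I) (μ : List E) : I × ℂ :=
  μ.foldr (fun e p => (π e p.1, lam e p.1 * p.2)) (i₀, 1)

/-- Let `S` be an atomic TCK family for `G`, with orthonormal
basis `{ξ i}` indexed by pairwise disjoint sets `Λ v`, edge injections `π e` with
pairwise disjoint ranges, and unimodular scalars `lam e i`; so `S_v` is the
projection onto `span{ξ i : i ∈ Λ v}` and `S_e ξ_i = lam e i • ξ_{π e i}` for
`i ∈ Λ (s e)` (and `S_e` kills the other basis vectors).  If `ξ = ξ_{i₀}`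
(`i₀ ∈ Λ v`) admits no nontrivial cycle `μ` at `v` with `S_μ ξ = c • ξ`, `|c| = 1`,
then `ξ` is a wandering vector: the vectors `S_μ ξ` over paths `μ` with source `v`
are pairwise orthogonal, and each is zero or of norm one. -/
theorem stmt14 (G : DirectedGraph) {H : Type} [NormedAddCommGroup H]
    [InnerProductSpace ℂ H] [CompleteSpace H] {I : Type}
    (Λ : G.V → Set I) (hdisj : ∀ v w, v ≠ w → Disjoint (Λ v) (Λ w))
    (hcover : ∀ i : I, ∃ v, i ∈ Λ v)
    (ξ : I → H) (hON : Orthonormal ℂ ξ)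
    (htot : (Submodule.span ℂ (Set.range ξ)).topologicalClosure = ⊤)
    (π : G.E → I → I)
    (hπmap : ∀ e, ∀ i ∈ Λ (G.src e), π e i ∈ Λ (G.rng e))
    (hπinj : ∀ e, Set.InjOn (π e) (Λ (G.src e)))
    (hπdisj : ∀ e f, e ≠ f → G.rng e = G.rng f →
      Disjoint (π e '' Λ (G.src e)) (π f '' Λ (G.src f)))
    (lam : G.E → I → ℂ) (hlam : ∀ e i, ‖lam e i‖ = 1)
    (S : TCKFamily G H)
    (hSv_eq : ∀ v, ∀ i ∈ Λ v, S.Sv v (ξ i) = ξ i)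
    (hSv_ne : ∀ v i, i ∉ Λ v → S.Sv v (ξ i) = 0)
    (hSe_eq : ∀ e, ∀ i ∈ Λ (G.src e), S.Se e (ξ i) = lam e i • ξ (π e i))
    (hSe_ne : ∀ e i, i ∉ Λ (G.src e) → S.Se e (ξ i) = 0)
    {v : G.V} {i₀ : I} (hi₀ : i₀ ∈ Λ v)
    (hnocyc : ∀ μ : List G.E, μ ≠ [] → G.IsCycleAt v μ →
      ∀ c : ℂ, ‖c‖ = 1 → pathOp S v μ (ξ i₀) ≠ c • ξ i₀) :
    (∀ μ ν : List G.E, G.IsPathAt v μ → G.IsPathAt v ν → μ ≠ ν →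
      (@inner ℂ H _ (pathOp S v μ (ξ i₀)) (pathOp S v ν (ξ i₀))) = 0) ∧
    (∀ μ : List G.E, G.IsPathAt v μ →
      pathOp S v μ (ξ i₀) = 0 ∨ ‖pathOp S v μ (ξ i₀)‖ = 1) := by
  classical
  set A : List G.E → I × ℂ := stmt14Aux π lam i₀ with hA
  have hAnil : A [] = (i₀, 1) := rfl
  have hAcons : ∀ (e : G.E) (rest : List G.E),
      A (e :: rest) = (π e (A rest).1, lam e (A rest).1 * (A rest).2) := by
    intro e rest; rfl
  -- norm of the accumulated scalar
  have hpc : ∀ μ : List G.E, ‖(A μ).2‖ = 1 := by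
    intro μ
    induction μ with
    | nil => simp [hAnil]
    | cons e rest ih => rw [hAcons]; simp [norm_mul, hlam, ih]
  -- tail lemma
  have tail : ∀ (e : G.E) (rest : List G.E), G.IsPathAt v (e :: rest) →
      G.IsPathAt v rest ∧ G.RngIs v rest (G.src e) := by
    rintro e rest ⟨hchain, hsrc⟩
    cases rest with
    | nil =>
      refine ⟨⟨List.isChain_nil, ?_⟩, ?_⟩
      · intro f hf; simp [List.getLast?] at hf
      · exact (hsrc e (by simp [List.getLast?])).symm
    | cons f t =>
      refine ⟨⟨hchain.tail, ?_⟩, ?_⟩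
      · intro g hg
        exact hsrc g (by rw [List.getLast?_cons_cons]; exact hg)
      · exact ((List.isChain_cons_cons.mp hchain).1).symm
  -- key structure lemma
  have key : ∀ μ : List G.E, G.IsPathAt v μ → ∀ w, G.RngIs v μ w →
      (A μ).1 ∈ Λ w ∧ pathOp S v μ (ξ i₀) = (A μ).2 • ξ (A μ).1 := by
    intro μ
    induction μ with
    | nil =>
      intro _ w hw
      have : v = w := hw
      subst this
      exact ⟨hi₀, by simp [pathOp, hAnil, hSv_eq v i₀ hi₀]⟩
    | cons e rest ih =>
      intro hpath w hw
      obtain ⟨hrest, hrng⟩ := tail e rest hpath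
      obtain ⟨hmem, heq⟩ := ih hrest (G.src e) hrng
      have hw' : G.rng e = w := hw
      have happ : pathOp S v (e :: rest) (ξ i₀) = S.Se e (pathOp S v rest (ξ i₀)) := by
        cases rest with
        | nil =>
          simp [pathOp, hSv_eq v i₀ hi₀]
        | cons f t =>
          simp [pathOp, List.map_cons, List.prod_cons, ContinuousLinearMap.mul_apply]
      rw [hAcons]
      constructor
      · exact hw' ▸ hπmap e _ hmem
      · rw [happ, heq, map_smul, hSe_eq e _ hmem, smul_smul, mul_comm]
  -- existence form of range
  have keyE : ∀ μ : List G.E, G.IsPathAt v μ → ∃ w, G.RngIs v μ w := by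
    intro μ _
    cases μ with
    | nil => exact ⟨v, rfl⟩
    | cons e rest => exact ⟨G.rng e, rfl⟩
  -- no nontrivial path returns to i₀
  have hni₀ : ∀ (e : G.E) (rest : List G.E), G.IsPathAt v (e :: rest) →
      (A (e :: rest)).1 ≠ i₀ := by
    intro e rest hpath hcontra
    have hkey := key (e :: rest) hpath (G.rng e) rfl
    have hre : G.rng e = v := by
      by_contra hne
      exact Set.disjoint_left.mp (hdisj _ _ hne) hkey.1 (hcontra ▸ hi₀)
    have hcyc : G.IsCycleAt v (e :: rest) := ⟨hpath, hre⟩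
    exact hnocyc (e :: rest) (by simp) hcyc ((A (e :: rest)).2) (hpc _)
      (by rw [hkey.2, hcontra])
  -- injectivity of μ ↦ (A μ).1 on paths at v
  have hinj : ∀ μ ν : List G.E, G.IsPathAt v μ → G.IsPathAt v ν →
      (A μ).1 = (A ν).1 → μ = ν := by
    intro μ
    induction μ with
    | nil =>
      intro ν _ hν hid
      cases ν with
      | nil => rfl
      | cons f rest =>
        exact absurd (hid.symm.trans (by rw [hAnil])) (hni₀ f rest hν)
    | cons e restμ ih =>
      intro ν hμ hν hid
      cases ν with
      | nil =>
        exact absurd (hid.trans (by rw [hAnil])) (hni₀ e restμ hμ)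
      | cons f restν =>
        obtain ⟨hrμ, hrngμ⟩ := tail e restμ hμ
        obtain ⟨hrν, hrngν⟩ := tail f restν hν
        have hmμ : (A restμ).1 ∈ Λ (G.src e) := (key restμ hrμ _ hrngμ).1
        have hmν : (A restν).1 ∈ Λ (G.src f) := (key restν hrν _ hrngν).1
        rw [hAcons, hAcons] at hid
        simp only at hid
        have hrr : G.rng e = G.rng f := by
          by_contra hne
          exact Set.disjoint_left.mp (hdisj _ _ hne) (hπmap e _ hmμ)
            (hid ▸ hπmap f _ hmν)
        have hef : e = f := by
          by_contra hne
          exact Set.disjoint_left.mp (hπdisj e f hne hrr)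
            ⟨(A restμ).1, hmμ, rfl⟩ ⟨(A restν).1, hmν, hid.symm⟩
        subst hef
        have : (A restμ).1 = (A restν).1 := hπinj e hmμ hmν hid
        rw [ih restν hrμ hrν this]
  constructor
  · intro μ ν hμ hν hne
    obtain ⟨wμ, hwμ⟩ := keyE μ hμ
    obtain ⟨wν, hwν⟩ := keyE ν hν
    rw [(key μ hμ wμ hwμ).2, (key ν hν wν hwν).2]
    rw [inner_smul_left, inner_smul_right,
      hON.2 (fun h => hne (hinj μ ν hμ hν h)), mul_zero, mul_zero]
  · intro μ hμ
    obtain ⟨w, hw⟩ := keyE μ hμ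
    right
    rw [(key μ hμ w hw).2, norm_smul, hpc, hON.1, mul_one]
end

section
/- The data of an atomic family (orthonormal basis {ξ_{v,i}}, injections π_e : Λ_{s(e)} → Λ_{r(e)} with pairwise disjoint ranges for edges with common range vertex, unimodular scalars λ_{e,i}) defines a TCK family: the S_v are pairwise orthogonal projections, S_e* S_e = S_{s(e)}, and Σ_{e∈F} S_e S_e* ≤ S_v for every finite F ⊆ r^{-1}(v). -/
/-! Every operator in sight is a weighted partial shift of the Hilbert basis `ξ`: it sends `ξ i`
to a unimodular multiple of `ξ (σ i)` for `i` in a set `s` and kills the other basis vectors.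
Its adjoint is the reverse shift, so `T* T` and `T T*` are the diagonal projections onto the
basis vectors indexed by `s` and by `σ '' s`. Diagonal projections multiply by intersecting their
index sets, and since the ranges `π e '' Λ (s e)` of the edges into `v` are disjoint subsets of
`Λ v`, the operator `S_v - ∑ S_e S_e*` is again a diagonal projection, hence positive. -/

open scoped InnerProductSpace
open ContinuousLinearMap

namespace HilbertBasis

variable {ι 𝕜 E : Type*} [RCLike 𝕜] [NormedAddCommGroup E] [InnerProductSpace 𝕜 E]
  (b : HilbertBasis ι 𝕜 E)

theorem clm_ext {A B : E →L[𝕜] E} (h : ∀ i, A (b i) = B (b i)) : A = B :=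
  ext_on (Submodule.dense_iff_topologicalClosure_eq_top.mpr b.dense_span)
    (by rintro _ ⟨i, rfl⟩; exact h i)

theorem ext_inner_left {x y : E} (h : ∀ i, ⟪b i, x⟫_𝕜 = ⟪b i, y⟫_𝕜) : x = y :=
  b.repr.injective <| lp.ext <| funext fun i => by simp only [b.repr_apply_apply, h]

theorem inner_eq_ite [DecidableEq ι] (i j : ι) : ⟪b i, b j⟫_𝕜 = if i = j then 1 else 0 :=
  orthonormal_iff_ite.mp b.orthonormal i j

section Diagonal

variable {P Q : E →L[𝕜] E} {s t : Set ι}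

theorem mul_apply_of_indicator (hP : ∀ i, P (b i) = s.indicator b i)
    (hQ : ∀ i, Q (b i) = t.indicator b i) (i : ι) : (P * Q) (b i) = (s ∩ t).indicator b i := by
  by_cases hi : i ∈ t <;> by_cases hi' : i ∈ s <;> simp [hi, hi', hP, hQ]

theorem sub_sum_apply_of_indicator {κ : Type*} {F : Finset κ} {Q : κ → E →L[𝕜] E}
    {t : κ → Set ι} (hP : ∀ i, P (b i) = s.indicator b i)
    (hQ : ∀ k ∈ F, ∀ i, Q k (b i) = (t k).indicator b i)
    (hdisj : (F : Set κ).PairwiseDisjoint t) (hsub : ⋃ k ∈ F, t k ⊆ s) (i : ι) :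
    (P - ∑ k ∈ F, Q k) (b i) = (s \ ⋃ k ∈ F, t k).indicator b i := by
  rw [sub_apply, sum_apply, hP, Finset.sum_congr rfl fun k hk => hQ k hk i,
    ← Finset.indicator_biUnion_apply F t hdisj, Set.indicator_sdiff hsub, Pi.sub_apply]

end Diagonal

section WeightedShift

variable [CompleteSpace E] {T : E →L[𝕜] E} {s : Set ι} {σ : ι → ι} {c : ι → 𝕜}

theorem adjoint_apply_image (hσ : s.InjOn σ)
    (hT : ∀ i, T (b i) = s.indicator (fun i => c i • b (σ i)) i) {i : ι} (hi : i ∈ s) :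
    adjoint T (b (σ i)) = star (c i) • b i := by
  classical
  refine b.ext_inner_left fun k => ?_
  rw [adjoint_inner_right, hT, inner_smul_right]
  by_cases hk : k ∈ s
  · rw [Set.indicator_of_mem hk, inner_smul_left, b.inner_eq_ite, b.inner_eq_ite,
      hσ.eq_iff hk hi]
    split_ifs with h <;> simp [h]
  · rw [Set.indicator_of_notMem hk, inner_zero_left, b.inner_eq_ite,
      if_neg (by rintro rfl; exact hk hi), mul_zero]

theorem adjoint_apply_of_notMem_image
    (hT : ∀ i, T (b i) = s.indicator (fun i => c i • b (σ i)) i) {j : ι} (hj : j ∉ σ '' s) :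
    adjoint T (b j) = 0 := by
  classical
  refine b.ext_inner_left fun k => ?_
  rw [adjoint_inner_right, hT, inner_zero_right]
  by_cases hk : k ∈ s
  · rw [Set.indicator_of_mem hk, inner_smul_left, b.inner_eq_ite,
      if_neg (by rintro rfl; exact hj ⟨k, hk, rfl⟩), mul_zero]
  · rw [Set.indicator_of_notMem hk, inner_zero_left]

theorem adjoint_mul_self_apply (hσ : s.InjOn σ)
    (hT : ∀ i, T (b i) = s.indicator (fun i => c i • b (σ i)) i) (hc : ∀ i ∈ s, ‖c i‖ = 1)
    (i : ι) : (adjoint T * T) (b i) = s.indicator b i := by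
  by_cases hi : i ∈ s
  · rw [mul_apply_eq_comp, hT, Set.indicator_of_mem hi, Set.indicator_of_mem hi, map_smul,
      b.adjoint_apply_image hσ hT hi, smul_smul, RCLike.star_def, RCLike.mul_conj, hc i hi]
    simp
  · rw [mul_apply_eq_comp, hT, Set.indicator_of_notMem hi, Set.indicator_of_notMem hi,
      map_zero]

theorem mul_adjoint_self_apply (hσ : s.InjOn σ)
    (hT : ∀ i, T (b i) = s.indicator (fun i => c i • b (σ i)) i) (hc : ∀ i ∈ s, ‖c i‖ = 1)
    (j : ι) : (T * adjoint T) (b j) = (σ '' s).indicator b j := by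
  by_cases hj : j ∈ σ '' s
  · obtain ⟨i, hi, rfl⟩ := hj
    rw [mul_apply_eq_comp, b.adjoint_apply_image hσ hT hi, map_smul, hT,
      Set.indicator_of_mem hi, Set.indicator_of_mem (Set.mem_image_of_mem σ hi), smul_smul,
      RCLike.star_def, RCLike.conj_mul, hc i hi]
    simp
  · rw [mul_apply_eq_comp, b.adjoint_apply_of_notMem_image hT hj, map_zero,
      Set.indicator_of_notMem hj]

-- A diagonal projection is the shift with `σ = id` and `c = 1`, so it equals `P* P`.
theorem isStarProjection_of_indicator {P : E →L[𝕜] E} (hP : ∀ i, P (b i) = s.indicator b i) :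
    IsStarProjection P := by
  have hPP : adjoint P * P = P := b.clm_ext fun i =>
    (b.adjoint_mul_self_apply (c := 1) (Set.injOn_id s) (by simpa using hP) (by simp) i).trans
      (hP i).symm
  refine ⟨b.clm_ext fun i => ?_, ?_⟩
  · rw [b.mul_apply_of_indicator hP hP, Set.inter_self, hP]
  · rw [← hPP, ← star_eq_adjoint]
    exact IsSelfAdjoint.star_mul_self P

end WeightedShift

end HilbertBasis

theorem stmt15_general (G : DirectedGraph) {H : Type} [NormedAddCommGroup H]
    [InnerProductSpace ℂ H] [CompleteSpace H] {I : Type}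
    (Λ : G.V → Set I) (hdisj : ∀ v w, v ≠ w → Disjoint (Λ v) (Λ w))
    (ξ : I → H) (hON : Orthonormal ℂ ξ)
    (htot : (Submodule.span ℂ (Set.range ξ)).topologicalClosure = ⊤)
    (π : G.E → I → I)
    (hπmap : ∀ e, ∀ i ∈ Λ (G.src e), π e i ∈ Λ (G.rng e))
    (hπinj : ∀ e, Set.InjOn (π e) (Λ (G.src e)))
    (hπdisj : ∀ e f, e ≠ f → G.rng e = G.rng f →
      Disjoint (π e '' Λ (G.src e)) (π f '' Λ (G.src f)))
    (lam : G.E → I → ℂ) (hlam : ∀ e i, ‖lam e i‖ = 1)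
    (Sv : G.V → H →L[ℂ] H) (Se : G.E → H →L[ℂ] H)
    (hSv_eq : ∀ v, ∀ i ∈ Λ v, Sv v (ξ i) = ξ i)
    (hSv_ne : ∀ v i, i ∉ Λ v → Sv v (ξ i) = 0)
    (hSe_eq : ∀ e, ∀ i ∈ Λ (G.src e), Se e (ξ i) = lam e i • ξ (π e i))
    (hSe_ne : ∀ e i, i ∉ Λ (G.src e) → Se e (ξ i) = 0) :
    (∀ v, IsSelfAdjoint (Sv v) ∧ Sv v * Sv v = Sv v) ∧
    (∀ v w, v ≠ w → Sv v * Sv w = 0) ∧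
    (∀ e, ContinuousLinearMap.adjoint (Se e) * Se e = Sv (G.src e)) ∧
    (∀ (v : G.V) (F : Finset G.E), (∀ e ∈ F, G.rng e = v) →
      ContinuousLinearMap.IsPositive
        (Sv v - ∑ e ∈ F, Se e * ContinuousLinearMap.adjoint (Se e))) := by
  set b := HilbertBasis.mk hON htot.ge
  have hb : ⇑b = ξ := HilbertBasis.coe_mk hON _
  have hSv : ∀ v i, Sv v (b i) = (Λ v).indicator b i := fun v i => by
    by_cases hi : i ∈ Λ v <;> simp [hb, hi, hSv_eq, hSv_ne]
  have hSe : ∀ e i, Se e (b i) = (Λ (G.src e)).indicator (fun i => lam e i • b (π e i)) i :=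
    fun e i => by by_cases hi : i ∈ Λ (G.src e) <;> simp [hb, hi, hSe_eq, hSe_ne]
  have hSeSe : ∀ e i, (Se e * adjoint (Se e)) (b i) = (π e '' Λ (G.src e)).indicator b i :=
    fun e => b.mul_adjoint_self_apply (hπinj e) (hSe e) fun i _ => hlam e i
  refine ⟨fun v => ?_, fun v w hvw => ?_, fun e => ?_, fun v F hF => ?_⟩
  · have hproj := b.isStarProjection_of_indicator (hSv v)
    exact ⟨hproj.isSelfAdjoint, hproj.isIdempotentElem⟩
  · refine b.clm_ext fun i => ?_
    rw [b.mul_apply_of_indicator (hSv v) (hSv w), (hdisj v w hvw).inter_eq,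
      Set.indicator_empty, zero_apply]
  · exact b.clm_ext fun i => by
      rw [b.adjoint_mul_self_apply (hπinj e) (hSe e) (fun i _ => hlam e i), hSv]
  · have hranges : (F : Set G.E).PairwiseDisjoint fun e => π e '' Λ (G.src e) :=
      fun e he f hf hef => hπdisj e f hef ((hF e he).trans (hF f hf).symm)
    have hsub : ⋃ e ∈ F, π e '' Λ (G.src e) ⊆ Λ v := Set.iUnion₂_subset fun e he => by
      rintro _ ⟨i, hi, rfl⟩
      exact hF e he ▸ hπmap e i hi
    exact IsPositive.of_isStarProjection <| b.isStarProjection_of_indicator <|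
      b.sub_sum_apply_of_indicator (hSv v) (fun e _ => hSeSe e) hranges hsub

/-- The data of an atomic family — an orthonormal basis `{ξ i}`
of `H` indexed by pairwise disjoint sets `Λ v`, injections `π e : Λ (s e) → Λ (r e)`
with pairwise disjoint ranges over edges with a common range vertex, unimodular
scalars `lam e i`, with `Sv v` the projection onto `span {ξ i : i ∈ Λ v}` and
`Se e ξ_i = lam e i • ξ_{π e i}` for `i ∈ Λ (s e)` (killing all other basis
vectors) — defines a TCK family: the `Sv v` are pairwise orthogonal projections,
`(Se e)* (Se e) = Sv (s e)`, and `∑_{e ∈ F} (Se e)(Se e)* ≤ Sv v` for every finite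
`F ⊆ r⁻¹(v)`. -/
theorem stmt15 (G : DirectedGraph) {H : Type} [NormedAddCommGroup H]
    [InnerProductSpace ℂ H] [CompleteSpace H] {I : Type}
    (Λ : G.V → Set I) (hdisj : ∀ v w, v ≠ w → Disjoint (Λ v) (Λ w))
    (hcover : ∀ i : I, ∃ v, i ∈ Λ v)
    (ξ : I → H) (hON : Orthonormal ℂ ξ)
    (htot : (Submodule.span ℂ (Set.range ξ)).topologicalClosure = ⊤)
    (π : G.E → I → I)
    (hπmap : ∀ e, ∀ i ∈ Λ (G.src e), π e i ∈ Λ (G.rng e))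
    (hπinj : ∀ e, Set.InjOn (π e) (Λ (G.src e)))
    (hπdisj : ∀ e f, e ≠ f → G.rng e = G.rng f →
      Disjoint (π e '' Λ (G.src e)) (π f '' Λ (G.src f)))
    (lam : G.E → I → ℂ) (hlam : ∀ e i, ‖lam e i‖ = 1)
    (Sv : G.V → H →L[ℂ] H) (Se : G.E → H →L[ℂ] H)
    (hSv_eq : ∀ v, ∀ i ∈ Λ v, Sv v (ξ i) = ξ i)
    (hSv_ne : ∀ v i, i ∉ Λ v → Sv v (ξ i) = 0)
    (hSe_eq : ∀ e, ∀ i ∈ Λ (G.src e), Se e (ξ i) = lam e i • ξ (π e i))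
    (hSe_ne : ∀ e i, i ∉ Λ (G.src e) → Se e (ξ i) = 0) :
    (∀ v, IsSelfAdjoint (Sv v) ∧ Sv v * Sv v = Sv v) ∧
    (∀ v w, v ≠ w → Sv v * Sv w = 0) ∧
    (∀ e, ContinuousLinearMap.adjoint (Se e) * Se e = Sv (G.src e)) ∧
    (∀ (v : G.V) (F : Finset G.E), (∀ e ∈ F, G.rng e = v) →
      ContinuousLinearMap.IsPositive
        (Sv v - ∑ e ∈ F, Se e * ContinuousLinearMap.adjoint (Se e))) :=
  stmt15_general G Λ hdisj ξ hON htot π hπmap hπinj hπdisj lam hlam Sv Se hSv_eq hSv_ne hSe_eq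
    hSe_ne
end

section
/- Let G be a finite directed graph which is transitive and in-degree regular with in-degree d, equipped with a strong edge colouring c : E → {1,…,d}. If some vertex v has a synchronizing word, then every vertex of G has a synchronizing word. -/
/-- A colour word `γ` is synchronizing for the vertex `v`: every vertex `w` is
reached from `v` by a path whose colour word is `γ`. -/
def Synchronizing (G : DirectedGraph) {d : ℕ} (c : G.E → Fin d)
    (γ : List (Fin d)) (v : G.V) : Prop :=
  ∀ w : G.V, ∃ μ : List G.E, G.IsPathAt v μ ∧ G.RngIs v μ w ∧ μ.map c = γ

/-- Let `G` be a finite transitive directed graph which is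
in-degree regular with in-degree `d`, with a strong edge colouring `c` (for every
vertex `v` and colour `j` there is a unique edge into `v` of colour `j`).  If some
vertex has a synchronizing word, then every vertex has a synchronizing word. -/
theorem stmt16 (G : DirectedGraph) [Fintype G.V] [Fintype G.E] {d : ℕ}
    (htrans : ∀ v w : G.V, ∃ μ : List G.E, G.IsPathAt v μ ∧ G.RngIs v μ w)
    (c : G.E → Fin d)
    (hstrong : ∀ (v : G.V) (j : Fin d), ∃! e : G.E, G.rng e = v ∧ c e = j)
    (v₀ : G.V) (hsync : ∃ γ : List (Fin d), Synchronizing G c γ v₀) :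
    ∀ v : G.V, ∃ γ : List (Fin d), Synchronizing G c γ v := by
  obtain ⟨γ, hγ⟩ := hsync
  intro v
  obtain ⟨ν, ⟨hνchain, hνsrc⟩, hνrng⟩ := htrans v v₀
  refine ⟨γ ++ ν.map c, fun w => ?_⟩
  obtain ⟨μ, ⟨hμchain, hμsrc⟩, hμrng, hμc⟩ := hγ w
  refine ⟨μ ++ ν, ⟨?_, ?_⟩, ?_, by simp [hμc]⟩
  · apply List.IsChain.append hμchain hνchain
    intro a ha b hb
    have h1 := hμsrc a ha
    cases ν with
    | nil => simp at hb
    | cons e t =>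
      simp only [List.head?_cons, Option.mem_def, Option.some.injEq] at hb
      subst hb
      exact h1.trans hνrng.symm
  · intro e he
    cases ν with
    | nil =>
      simp only [List.append_nil] at he
      exact (hμsrc e he).trans hνrng.symm
    | cons f t =>
      rw [List.getLast?_append] at he
      have : (f :: t).getLast?.isSome := by
        simp [List.getLast?_isSome]
      rw [Option.or_of_isSome this] at he
      exact hνsrc e he
  · cases μ with
    | nil =>
      have : v₀ = w := hμrng
      subst this
      simpa using hνrng
    | cons e t =>
      exact hμrng
end

section
/- Let G be a finite, transitive, in-degree d-regular directed graph containing a loop e at a vertex v. Then G admits a strong edge colouring with d colours and a synchronizing word: colour the loop e and all edges of a directed spanning tree rooted at v with colour 1, extend arbitrarily to a strong edge colouring, and then the word 1^k is synchronizing for v, where k is the depth of the spanning tree. -/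
theorem exists_equiv_fin_apply_eq {α : Type*} {d : ℕ} (h : Nat.card α = d) (a : α) (j : Fin d) :
    ∃ σ : α ≃ Fin d, σ a = j := by
  have : Finite α := Nat.finite_of_card_ne_zero (h ▸ j.pos.ne')
  let σ := Finite.equivFinOfCardEq h
  exact ⟨σ.trans (Equiv.swap (σ a) j), by simp⟩

theorem Function.exists_forall_iterate_eq {α : Type*} [Finite α] {g : α → α} {v : α}
    (hv : g v = v) (h : ∀ w, ∃ n, g^[n] w = v) : ∃ k, ∀ w, g^[k] w = v := by
  choose n hn using h
  obtain ⟨k, hk⟩ := (Set.finite_range n).bddAbove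
  refine ⟨k, fun w => ?_⟩
  rw [← Nat.sub_add_cancel (hk ⟨w, rfl⟩), Function.iterate_add_apply, hn,
    Function.iterate_fixed hv]

namespace DirectedGraph

variable {G : DirectedGraph} {v : G.V}

theorem IsPathAt.cons {μ : List G.E} {e : G.E} (hμ : G.IsPathAt v μ)
    (hr : G.RngIs v μ (G.src e)) : G.IsPathAt v (e :: μ) := by
  obtain ⟨hchain, hsrc⟩ := hμ
  cases μ with
  | nil => exact ⟨List.isChain_singleton e, by simpa [SrcIs] using hr.symm⟩
  | cons b μ =>
    exact ⟨List.isChain_cons_cons.mpr ⟨hr.symm, hchain⟩,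
      by simpa only [SrcIs, List.getLast?_cons_cons] using hsrc⟩

theorem IsPathAt.of_cons {μ : List G.E} {e : G.E} (h : G.IsPathAt v (e :: μ)) :
    G.IsPathAt v μ ∧ G.RngIs v μ (G.src e) := by
  obtain ⟨hchain, hsrc⟩ := h
  cases μ with
  | nil => exact ⟨⟨List.isChain_nil, by simp [SrcIs]⟩, (hsrc e (by simp)).symm⟩
  | cons b μ =>
    obtain ⟨hcomp, hchain⟩ := List.isChain_cons_cons.mp hchain
    exact ⟨⟨hchain, by simpa only [SrcIs, List.getLast?_cons_cons] using hsrc⟩, hcomp.symm⟩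

-- Junk value `0` when `w` is not reachable from `v`.
noncomputable def pathDist (G : DirectedGraph) (v w : G.V) : ℕ :=
  sInf {n | ∃ μ : List G.E, G.IsPathAt v μ ∧ G.RngIs v μ w ∧ μ.length = n}

theorem exists_edge_pathDist_lt (hreach : ∀ w, ∃ μ : List G.E, G.IsPathAt v μ ∧ G.RngIs v μ w)
    {w : G.V} (hw : w ≠ v) : ∃ e : G.E, G.rng e = w ∧ G.pathDist v (G.src e) < G.pathDist v w := by
  obtain ⟨μ, hμ, hrng, hlen⟩ : ∃ μ : List G.E,
      G.IsPathAt v μ ∧ G.RngIs v μ w ∧ μ.length = G.pathDist v w := by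
    obtain ⟨μ, hμ, hrng⟩ := hreach w
    exact Nat.sInf_mem (s := {n | ∃ μ : List G.E, G.IsPathAt v μ ∧ G.RngIs v μ w ∧ μ.length = n})
      ⟨μ.length, μ, hμ, hrng, rfl⟩
  cases μ with
  | nil => exact absurd hrng.symm hw
  | cons e μ =>
    obtain ⟨hμ', hrng'⟩ := hμ.of_cons
    have : G.pathDist v (G.src e) ≤ μ.length := Nat.sInf_le ⟨μ, hμ', hrng', rfl⟩
    exact ⟨e, hrng, by simp only [List.length_cons] at hlen; omega⟩

theorem exists_treeEdge_iterate_eq_root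
    (hreach : ∀ w, ∃ μ : List G.E, G.IsPathAt v μ ∧ G.RngIs v μ w)
    (e₀ : G.E) (hrng : G.rng e₀ = v) :
    ∃ f : G.V → G.E, (∀ w, G.rng (f w) = w) ∧ f v = e₀ ∧ ∀ w, ∃ n, (G.src ∘ f)^[n] w = v := by
  have hedge : ∀ w, ∃ e : G.E, G.rng e = w ∧ (w = v → e = e₀) ∧
      (w ≠ v → G.pathDist v (G.src e) < G.pathDist v w) := by
    intro w
    by_cases hw : w = v
    · exact ⟨e₀, hw ▸ hrng, fun _ => rfl, fun h => absurd hw h⟩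
    · obtain ⟨e, he, hlt⟩ := exists_edge_pathDist_lt hreach hw
      exact ⟨e, he, fun h => absurd h hw, fun _ => hlt⟩
  choose f hf hfv hlt using hedge
  refine ⟨f, hf, hfv v rfl, fun w => ?_⟩
  induction hd : G.pathDist v w using Nat.strong_induction_on generalizing w with
  | _ n ih =>
    by_cases hw : w = v
    · exact ⟨0, hw⟩
    · obtain ⟨m, hm⟩ := ih _ (hd ▸ hlt w hw) (G.src (f w)) rfl
      exact ⟨m + 1, hm⟩

def backPath (G : DirectedGraph) (f : G.V → G.E) : ℕ → G.V → List G.E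
  | 0, _ => []
  | n + 1, w => f w :: G.backPath f n (G.src (f w))

theorem backPath_isPathAt {f : G.V → G.E} (hf : ∀ w, G.rng (f w) = w) (n : ℕ) (w : G.V) :
    G.IsPathAt ((G.src ∘ f)^[n] w) (G.backPath f n w) ∧
      G.RngIs ((G.src ∘ f)^[n] w) (G.backPath f n w) w := by
  induction n generalizing w with
  | zero => exact ⟨⟨List.isChain_nil, by simp [SrcIs, backPath]⟩, rfl⟩
  | succ n ih =>
    obtain ⟨hpath, hrng⟩ := ih (G.src (f w))
    exact ⟨hpath.cons hrng, hf w⟩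

theorem map_backPath {d : ℕ} {c : G.E → Fin d} {f : G.V → G.E} {j : Fin d}
    (hc : ∀ w, c (f w) = j) (n : ℕ) (w : G.V) :
    (G.backPath f n w).map c = List.replicate n j := by
  induction n generalizing w with
  | zero => rfl
  | succ n ih => simp [backPath, hc, ih, List.replicate_succ]

theorem synchronizing_replicate {d k : ℕ} {c : G.E → Fin d} {f : G.V → G.E} {j : Fin d}
    (hf : ∀ w, G.rng (f w) = w) (hc : ∀ w, c (f w) = j)
    (hk : ∀ w, (G.src ∘ f)^[k] w = v) : Synchronizing G c (List.replicate k j) v := by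
  intro w
  have hpath := backPath_isPathAt hf k w
  rw [hk w] at hpath
  exact ⟨G.backPath f k w, hpath.1, hpath.2, map_backPath hc k w⟩

def IsStrongColouring (G : DirectedGraph) {d : ℕ} (c : G.E → Fin d) : Prop :=
  ∀ (v : G.V) (j : Fin d), ∃! e : G.E, G.rng e = v ∧ c e = j

def fibreColouring {d : ℕ} (σ : ∀ w : G.V, {e : G.E // G.rng e = w} ≃ Fin d) (e : G.E) : Fin d :=
  σ (G.rng e) ⟨e, rfl⟩

theorem fibreColouring_apply {d : ℕ} (σ : ∀ w : G.V, {e : G.E // G.rng e = w} ≃ Fin d)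
    {e : G.E} {w : G.V} (h : G.rng e = w) : fibreColouring σ e = σ w ⟨e, h⟩ := by
  subst h
  rfl

theorem isStrongColouring_fibreColouring {d : ℕ}
    (σ : ∀ w : G.V, {e : G.E // G.rng e = w} ≃ Fin d) : G.IsStrongColouring (fibreColouring σ) := by
  intro w j
  refine ⟨((σ w).symm j).val, ⟨((σ w).symm j).prop, ?_⟩, ?_⟩
  · rw [fibreColouring_apply σ ((σ w).symm j).prop]
    simp
  · rintro e ⟨he, hj⟩
    rw [fibreColouring_apply σ he, ← Equiv.eq_symm_apply] at hj
    exact congrArg Subtype.val hj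

theorem exists_isStrongColouring_extending {d : ℕ}
    (hreg : ∀ w : G.V, Nat.card {e : G.E // G.rng e = w} = d)
    {f : G.V → G.E} (hf : ∀ w, G.rng (f w) = w) (j : Fin d) :
    ∃ c : G.E → Fin d, G.IsStrongColouring c ∧ ∀ w, c (f w) = j := by
  choose σ hσ using fun w => exists_equiv_fin_apply_eq (hreg w) ⟨f w, hf w⟩ j
  exact ⟨fibreColouring σ, isStrongColouring_fibreColouring σ,
    fun w => (fibreColouring_apply σ (hf w)).trans (hσ w)⟩

end DirectedGraph

/-- Let `G` be a finite, transitive, in-degree `d`-regular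
directed graph containing a loop `e₀` at a vertex.  Then `G` admits a strong edge
colouring with `d` colours together with a synchronizing word for that vertex,
and the word may be taken constant (of the form `jᵏ`, the colour of the loop and
of a directed spanning tree). -/
theorem stmt17 (G : DirectedGraph) [Fintype G.V] [Fintype G.E] {d : ℕ}
    (htrans : ∀ v w : G.V, ∃ μ : List G.E, G.IsPathAt v μ ∧ G.RngIs v μ w)
    (hreg : ∀ v : G.V, Nat.card {e : G.E // G.rng e = v} = d)
    (e₀ : G.E) (hloop : G.src e₀ = G.rng e₀) :
    ∃ c : G.E → Fin d,
      (∀ (v : G.V) (j : Fin d), ∃! e : G.E, G.rng e = v ∧ c e = j) ∧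
      ∃ (j : Fin d) (k : ℕ),
        Synchronizing G c (List.replicate k j) (G.src e₀) := by
  obtain ⟨f, hf, hfv, hroot⟩ :=
    DirectedGraph.exists_treeEdge_iterate_eq_root (htrans (G.src e₀)) e₀ hloop.symm
  have hd : 0 < d := by
    have : Nonempty {e : G.E // G.rng e = G.src e₀} := ⟨⟨e₀, hloop.symm⟩⟩
    exact hreg (G.src e₀) ▸ Nat.card_pos
  obtain ⟨c, hc, hcf⟩ := DirectedGraph.exists_isStrongColouring_extending hreg hf ⟨0, hd⟩
  obtain ⟨k, hk⟩ := Function.exists_forall_iterate_eq (g := G.src ∘ f) (by simp [hfv]) hroot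
  exact ⟨c, hc, ⟨0, hd⟩, k, DirectedGraph.synchronizing_replicate hf hcf hk⟩
end

section
/- Let G be an in-degree d-regular directed graph with a strong edge colouring c, let W_1,…,W_d be isometries on a Hilbert space H with Σ_{j=1}^d W_j W_j* = I, let K = ⊕_{v∈V} H_v with each H_v a copy of H via unitaries J_v : K → H (with initial space H_v), and define S_v = P_{H_v} and S_e = J_{r(e)}* W_{c(e)} J_{s(e)}. Then (S_v, S_e) is a Cuntz–Krieger family for G: the S_v are pairwise orthogonal projections summing to I, S_e* S_e = S_{s(e)}, and Σ_{r(e)=v} S_e S_e* = S_v for every vertex v. -/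
open ContinuousLinearMap in
/-- Let `G` be an in-degree `d`-regular directed graph with a
strong edge colouring `c`, let `W₁,…,W_d` be Cuntz isometries on `H`, and let
`K = ⊕_v H_v` with partial isometries `J_v : K → H` having `J_v J_v* = I_H`,
pairwise orthogonal initial projections `J_v* J_v` summing to `I_K`.  Then
`S_v := J_v* J_v` and `S_e := J_{r(e)}* W_{c(e)} J_{s(e)}` form a Cuntz–Krieger
family for `G`: the `S_v` are pairwise orthogonal projections summing to the
identity, `S_e* S_e = S_{s(e)}`, and `∑_{r(e)=v} S_e S_e* = S_v` for every `v`. -/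
theorem stmt18 (G : DirectedGraph) {d : ℕ} {H K : Type}
    [NormedAddCommGroup H] [InnerProductSpace ℂ H] [CompleteSpace H]
    [NormedAddCommGroup K] [InnerProductSpace ℂ K] [CompleteSpace K]
    (c : G.E → Fin d)
    (hstrong : ∀ (v : G.V) (j : Fin d), ∃! e : G.E, G.rng e = v ∧ c e = j)
    (W : Fin d → H →L[ℂ] H)
    (hWiso : ∀ j, adjoint (W j) * W j = 1)
    (hWcuntz : ∑ j : Fin d, W j * adjoint (W j) = 1)
    (J : G.V → K →L[ℂ] H)
    (hJco : ∀ v, J v ∘L adjoint (J v) = 1)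
    (hJorth : ∀ v w, v ≠ w → J v ∘L adjoint (J w) = 0)
    (hJtotal : ∀ x : K, HasSum (fun v : G.V => (adjoint (J v) ∘L J v) x) x) :
    (∀ v : G.V, IsSelfAdjoint (adjoint (J v) ∘L J v) ∧
      (adjoint (J v) ∘L J v) * (adjoint (J v) ∘L J v) = adjoint (J v) ∘L J v) ∧
    (∀ v w : G.V, v ≠ w →
      (adjoint (J v) ∘L J v) * (adjoint (J w) ∘L J w) = 0) ∧
    (∀ x : K, HasSum (fun v : G.V => (adjoint (J v) ∘L J v) x) x) ∧
    (∀ e : G.E,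
      adjoint (adjoint (J (G.rng e)) ∘L W (c e) ∘L J (G.src e)) *
        (adjoint (J (G.rng e)) ∘L W (c e) ∘L J (G.src e)) =
      adjoint (J (G.src e)) ∘L J (G.src e)) ∧
    (∀ v : G.V, HasSum
      (fun e : {e : G.E // G.rng e = v} =>
        (adjoint (J (G.rng e.1)) ∘L W (c e.1) ∘L J (G.src e.1)) *
          adjoint (adjoint (J (G.rng e.1)) ∘L W (c e.1) ∘L J (G.src e.1)))
      (adjoint (J v) ∘L J v)) := by
  have hco : ∀ (v : G.V) (y : H), J v (adjoint (J v) y) = y := fun v y => by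
    simpa using ContinuousLinearMap.ext_iff.mp (hJco v) y
  have horth : ∀ (v w : G.V), v ≠ w → ∀ y : H, J v (adjoint (J w) y) = 0 :=
    fun v w hvw y => by simpa using ContinuousLinearMap.ext_iff.mp (hJorth v w hvw) y
  have hiso : ∀ (j : Fin d) (y : H), adjoint (W j) (W j y) = y := fun j y => by
    simpa [ContinuousLinearMap.mul_apply] using ContinuousLinearMap.ext_iff.mp (hWiso j) y
  have hcz : ∀ y : H, ∑ j : Fin d, W j (adjoint (W j) y) = y := fun y => by
    simpa [ContinuousLinearMap.sum_apply, ContinuousLinearMap.mul_apply] using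
      ContinuousLinearMap.ext_iff.mp hWcuntz y
  constructor
  · intro v
    constructor
    · exact (ContinuousLinearMap.isSelfAdjoint_iff').2 (by
        rw [ContinuousLinearMap.adjoint_comp, ContinuousLinearMap.adjoint_adjoint])
    · ext x
      simp only [ContinuousLinearMap.mul_apply, ContinuousLinearMap.comp_apply]
      rw [hco]
  refine ⟨?_, hJtotal, ?_, ?_⟩
  · intro v w hvw
    ext x
    simp only [ContinuousLinearMap.mul_apply, ContinuousLinearMap.comp_apply,
      ContinuousLinearMap.zero_apply]
    rw [horth v w hvw, map_zero]
  · intro e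
    rw [ContinuousLinearMap.adjoint_comp, ContinuousLinearMap.adjoint_comp,
      ContinuousLinearMap.adjoint_adjoint]
    ext x
    simp only [ContinuousLinearMap.mul_apply, ContinuousLinearMap.comp_apply]
    rw [hco (G.rng e), hiso]
  · intro v
    have key : ∀ e : {e : G.E // G.rng e = v},
        (adjoint (J (G.rng e.1)) ∘L W (c e.1) ∘L J (G.src e.1)) *
          adjoint (adjoint (J (G.rng e.1)) ∘L W (c e.1) ∘L J (G.src e.1)) =
        adjoint (J v) ∘L (W (c e.1) ∘L adjoint (W (c e.1))) ∘L J v := by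
      intro e
      rw [ContinuousLinearMap.adjoint_comp, ContinuousLinearMap.adjoint_comp,
        ContinuousLinearMap.adjoint_adjoint, e.2]
      ext x
      simp only [ContinuousLinearMap.mul_apply, ContinuousLinearMap.comp_apply]
      rw [hco (G.src e.1)]
    let φ : Fin d ≃ {e : G.E // G.rng e = v} :=
      { toFun := fun j => ⟨(hstrong v j).choose, (hstrong v j).choose_spec.1.1⟩
        invFun := fun e => c e.1
        left_inv := fun j => (hstrong v j).choose_spec.1.2
        right_inv := fun e => Subtype.ext
          ((hstrong v (c e.1)).choose_spec.2 e.1 ⟨e.2, rfl⟩).symm }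
    rw [← Equiv.hasSum_iff φ]
    have heq : (fun j : Fin d =>
        (adjoint (J (G.rng (φ j).1)) ∘L W (c (φ j).1) ∘L J (G.src (φ j).1)) *
          adjoint (adjoint (J (G.rng (φ j).1)) ∘L W (c (φ j).1) ∘L J (G.src (φ j).1)))
        = fun j : Fin d => adjoint (J v) ∘L (W j ∘L adjoint (W j)) ∘L J v := by
      funext j
      have hc : c (φ j).1 = j := (hstrong v j).choose_spec.1.2
      rw [key (φ j), hc]
    rw [Function.comp_def, heq]
    have hsum : ∑ j : Fin d, adjoint (J v) ∘L (W j ∘L adjoint (W j)) ∘L J v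
        = adjoint (J v) ∘L J v := by
      ext x
      simp only [ContinuousLinearMap.sum_apply, ContinuousLinearMap.comp_apply]
      rw [← map_sum, hcz]
    exact hsum ▸ hasSum_fintype _
end
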